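/- For the standard n-simplex Tₙ, let Q₁,…,Qₙ be the centers of mass of the faces (Qₖ has all coordinates 1/n except the k-th which is 0) and Qₙ₊₁ = (1/n,…,1/n). Then L(f) = -((n-2)(n+1)/((n+2)·n!))·f(1/(n+1),…,1/(n+1)) + (n²/(n+2)!)·Σₖ₌₁ⁿ⁺¹ f(Qₖ) satisfies L(f) = ∫_{Tₙ} f dV for every polynomial f of total degree ≤ 2. -/

import Mathlib

/-!
Both sides are linear in `f`, so it suffices to check the monomials `x^d` with `|d| ≤ 2`.
Their integrals are given by the Dirichlet formula `∫_{Tₙ} x^d = ∏ dᵢ! / (n + |d|)!`, proved by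
induction on `n`: the slice of `Tₙ₊₁` at first coordinate `t` is `(1 - t) • Tₙ`, so by
homogeneity the slice integral is a power of `1 - t` times an integral over `Tₙ`, and integrating
over `t` leaves a Beta integral. On the other side, `x^d` takes the value `(n + 1)^(-|d|)` at
the centroid, and summed over the face centers it gives `(1 + #{i | dᵢ = 0}) n^(-|d|)`, since the center of face `k` kills `x^d` exactly when `dₖ ≠ 0`.
Comparing the two is then arithmetic, separately for square-free monomials and for `xᵢ²`.
-/

open MeasureTheory MvPolynomial

/-- The standard n-simplex in ℝⁿ. -/
def Simplex (n : ℕ) : Set (Fin n → ℝ) := {v | (∀ i, 0 ≤ v i) ∧ ∑ i, v i ≤ 1}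

/-- For `k < n`, the center of mass of the k-th face of the standard n-simplex
(all coordinates `1/n` except the k-th, which is 0); for `k = n`, the point
`(1/n, …, 1/n)`, the center of mass of the face opposite the origin. -/
noncomputable def faceCenter (n : ℕ) (k : Fin (n + 1)) : Fin n → ℝ :=
  fun i => if (k : ℕ) = (i : ℕ) then 0 else 1 / (n : ℝ)

open Set Nat Pointwise

theorem integral_pow_mul_one_sub_pow (a b : ℕ) :
    ∫ t in (0 : ℝ)..1, t ^ a * (1 - t) ^ b = (a ! * b ! : ℝ) / (a + b + 1)! := by
  induction b generalizing a with
  | zero =>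
    simp only [pow_zero, mul_one, integral_pow, factorial_zero, add_zero, factorial_succ]
    push_cast
    field_simp
    simp
  | succ b ih =>
    have hsplit : ∀ t : ℝ,
        t ^ a * (1 - t) ^ (b + 1) = t ^ a * (1 - t) ^ b - t ^ (a + 1) * (1 - t) ^ b :=
      fun t => by ring
    have hint : ∀ c, IntervalIntegrable (fun t : ℝ => t ^ c * (1 - t) ^ b) volume 0 1 :=
      fun c => (by fun_prop : Continuous fun t : ℝ => t ^ c * (1 - t) ^ b).intervalIntegrable 0 1
    simp only [hsplit]
    rw [intervalIntegral.integral_sub (hint a) (hint (a + 1)), ih, ih,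
      show a + (b + 1) + 1 = a + b + 1 + 1 by ring, show a + 1 + b + 1 = a + b + 1 + 1 by ring]
    push_cast [factorial_succ]
    field_simp
    ring

theorem isCompact_simplex (n : ℕ) : IsCompact (Simplex n) := by
  refine (isCompact_Icc (a := (0 : Fin n → ℝ)) (b := 1)).of_isClosed_subset ?_ ?_
  · exact (isClosed_le continuous_const continuous_id).inter
      (isClosed_le (continuous_finsetSum _ fun i _ => continuous_apply i) continuous_const)
  · rintro v ⟨hv, hsum⟩
    exact ⟨hv, fun i => (Finset.single_le_sum (fun j _ => hv j) (Finset.mem_univ i)).trans hsum⟩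

theorem measurableSet_simplex (n : ℕ) : MeasurableSet (Simplex n) :=
  (isCompact_simplex n).isClosed.measurableSet

theorem mem_smul_simplex_iff {n : ℕ} {c : ℝ} (hc : 0 < c) {y : Fin n → ℝ} :
    y ∈ c • Simplex n ↔ (∀ i, 0 ≤ y i) ∧ ∑ i, y i ≤ c := by
  simp only [mem_smul_set_iff_inv_smul_mem₀ hc.ne', Simplex, mem_ofPred_eq, Pi.smul_apply,
    smul_eq_mul, ← Finset.mul_sum, inv_mul_le_iff₀ hc, mul_one]
  simp [hc]

theorem integrableOn_simplex_monomial (n : ℕ) (a : Fin n → ℕ) :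
    IntegrableOn (fun v => ∏ i, v i ^ a i) (Simplex n) :=
  (by fun_prop : Continuous fun v : Fin n → ℝ => ∏ i, v i ^ a i).continuousOn.integrableOn_compact
    (isCompact_simplex n)

theorem preimage_cons_simplex_of_mem_Ico {n : ℕ} {t : ℝ} (ht : t ∈ Ico 0 1) :
    Fin.cons t ⁻¹' Simplex (n + 1) = (1 - t) • Simplex n := by
  ext y
  rw [mem_smul_simplex_iff (sub_pos.2 ht.2)]
  simp only [Simplex, mem_preimage, mem_ofPred_eq, Fin.forall_fin_succ, Fin.cons_zero,
    Fin.cons_succ, Fin.sum_univ_succ, ht.1, true_and, le_sub_iff_add_le']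

theorem preimage_cons_simplex_of_notMem_Icc {n : ℕ} {t : ℝ} (ht : t ∉ Icc 0 1) :
    Fin.cons t ⁻¹' Simplex (n + 1) = ∅ := by
  refine eq_empty_of_forall_notMem fun y ⟨hy, hsum⟩ => ht ⟨hy 0, ?_⟩
  rw [Fin.sum_univ_succ] at hsum
  have : 0 ≤ ∑ i : Fin n, y i := Finset.sum_nonneg fun i _ => by simpa using hy i.succ
  simp only [Fin.cons_zero, Fin.cons_succ] at hsum
  linarith

theorem setIntegral_simplex_succ {E : Type*} [NormedAddCommGroup E] [NormedSpace ℝ E] {n : ℕ}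
    {g : (Fin (n + 1) → ℝ) → E} (hg : IntegrableOn g (Simplex (n + 1))) :
    ∫ v in Simplex (n + 1), g v
      = ∫ t in Ioo 0 1, ∫ y in (1 - t) • Simplex n, g (Fin.cons t y) := by
  have hcons := (volume_preserving_piFinSuccAbove (fun _ : Fin (n + 1) => ℝ) 0).symm
  have hsymm : ∀ p : ℝ × (Fin n → ℝ), (MeasurableEquiv.piFinSuccAbove (fun _ => ℝ) 0).symm p =
      Fin.cons p.1 p.2 := fun p => by
    simp [MeasurableEquiv.piFinSuccAbove_symm_apply, Fin.consEquiv]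
  have hint : Integrable
      (fun p : ℝ × (Fin n → ℝ) => (Simplex (n + 1)).indicator g (Fin.cons p.1 p.2))
      (volume.prod volume) := by
    simpa only [Function.comp_def, hsymm, ← Measure.volume_eq_prod] using
      (hcons.integrable_comp_emb (MeasurableEquiv.measurableEmbedding _)).2
        (hg.integrable_indicator (measurableSet_simplex _))
  rw [← integral_indicator (measurableSet_simplex _),
    ← hcons.integral_comp (MeasurableEquiv.measurableEmbedding _), Measure.volume_eq_prod]
  simp only [hsymm]
  rw [integral_prod _ hint, ← integral_Ico_eq_integral_Ioo, ← integral_indicator measurableSet_Ico]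
  refine integral_congr_ae ?_
  filter_upwards [compl_mem_ae_iff.2 (measure_singleton (1 : ℝ))] with t ht
  by_cases hIco : t ∈ Ico 0 1
  · rw [indicator_of_mem hIco, ← preimage_cons_simplex_of_mem_Ico hIco,
      ← integral_indicator ((measurableSet_simplex _).preimage (by fun_prop))]
    rfl
  · have hIcc : t ∉ Icc 0 1 := fun h => hIco ⟨h.1, lt_of_le_of_ne h.2 ht⟩
    simp [indicator_of_notMem hIco, ← mem_preimage,
      preimage_cons_simplex_of_notMem_Icc hIcc]

theorem setIntegral_smul_set_of_homogeneous {E : Type*} [NormedAddCommGroup E]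
    [NormedSpace ℝ E] [MeasurableSpace E] [BorelSpace E] [FiniteDimensional ℝ E]
    (μ : Measure E) [μ.IsAddHaarMeasure] {f : E → ℝ} {k : ℕ}
    (hf : ∀ (c : ℝ) x, f (c • x) = c ^ k * f x) (s : Set E) {c : ℝ} (hc : 0 < c) :
    ∫ x in c • s, f x ∂μ = c ^ (Module.finrank ℝ E + k) * ∫ x in s, f x ∂μ := by
  have h := Measure.setIntegral_comp_smul_of_pos μ f s hc
  simp only [hf, integral_const_mul, smul_eq_mul] at h
  rw [pow_add, mul_assoc, h]
  field_simp

theorem integral_simplex_monomial : ∀ (n : ℕ) (a : Fin n → ℕ),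
    ∫ v in Simplex n, ∏ i, v i ^ a i = (∏ i, ((a i)! : ℝ)) / (n + ∑ i, a i)!
  | 0, a => by
    have : Simplex 0 = univ := by ext v; simp [Simplex]
    simp [this, measureReal_def, volume_pi]
  | n + 1, a => by
    have hhom : ∀ (c : ℝ) (y : Fin n → ℝ),
        ∏ i, (c • y) i ^ a i.succ = c ^ (∑ i : Fin n, a i.succ) * ∏ i, y i ^ a i.succ :=
      fun c y => by
      simp only [Pi.smul_apply, smul_eq_mul, mul_pow, Finset.prod_mul_distrib,
        Finset.prod_pow_eq_pow_sum]
    have hslice : ∀ t ∈ Ioo (0 : ℝ) 1,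
        ∫ y in (1 - t) • Simplex n, ∏ i, (Fin.cons t y : Fin (n + 1) → ℝ) i ^ a i
          = t ^ a 0 * (1 - t) ^ (n + ∑ i : Fin n, a i.succ)
            * ∫ y in Simplex n, ∏ i, y i ^ a i.succ := fun t ht => by
      simp only [Fin.prod_univ_succ, Fin.cons_zero, Fin.cons_succ, integral_const_mul]
      rw [setIntegral_smul_set_of_homogeneous (f := fun y : Fin n → ℝ => ∏ i, y i ^ a i.succ)
        volume hhom _ (sub_pos.2 ht.2), Module.finrank_fin_fun]
      ring
    rw [setIntegral_simplex_succ (integrableOn_simplex_monomial _ a),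
      setIntegral_congr_fun measurableSet_Ioo hslice, ← integral_Ioc_eq_integral_Ioo,
      ← intervalIntegral.integral_of_le zero_le_one, intervalIntegral.integral_mul_const,
      integral_pow_mul_one_sub_pow, integral_simplex_monomial n, Fin.prod_univ_succ,
      Fin.sum_univ_succ,
      show n + 1 + (a 0 + ∑ i : Fin n, a i.succ) = a 0 + (n + ∑ i : Fin n, a i.succ) + 1 by omega]
    field_simp

noncomputable def simplexCubature (n : ℕ) (f : (Fin n → ℝ) → ℝ) : ℝ :=
  -(((n : ℝ) - 2) * (n + 1) / ((n + 2) * (n ! : ℝ))) * f (fun _ => 1 / (n + 1 : ℝ))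
    + ((n : ℝ) ^ 2 / ((n + 2)! : ℝ)) * ∑ k : Fin (n + 1), f (faceCenter n k)

theorem simplexCubature_sum_mul {n : ℕ} {ι : Type*} (s : Finset ι) (c : ι → ℝ)
    (f : ι → (Fin n → ℝ) → ℝ) :
    simplexCubature n (fun x => ∑ i ∈ s, c i * f i x)
      = ∑ i ∈ s, c i * simplexCubature n (f i) := by
  simp only [simplexCubature, Finset.mul_sum, mul_add, Finset.sum_add_distrib]
  rw [Finset.sum_comm (s := Finset.univ)]
  congr 1 <;> refine Finset.sum_congr rfl fun _ _ => ?_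
  · ring
  · exact Finset.sum_congr rfl fun _ _ => by ring

theorem sum_faceCenter_monomial (n : ℕ) (d : Fin n → ℕ) :
    ∑ k, ∏ i, faceCenter n k i ^ d i
      = (1 + (Finset.univ.filter (d · = 0)).card) * (1 / n : ℝ) ^ ∑ i, d i := by
  have hlast : ∏ i, faceCenter n (Fin.last n) i ^ d i = (1 / n : ℝ) ^ ∑ i, d i := by
    simp [faceCenter, Fin.val_last, (Fin.is_lt _).ne', Finset.prod_pow_eq_pow_sum]
  have hface : ∀ j : Fin n, ∏ i, faceCenter n j.castSucc i ^ d i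
      = if d j = 0 then (1 / n : ℝ) ^ ∑ i, d i else 0 := fun j => by
    simp only [faceCenter, Fin.val_castSucc, Fin.val_inj]
    split_ifs with hj
    · rw [← Finset.prod_pow_eq_pow_sum]
      refine Finset.prod_congr rfl fun i _ => ?_
      rcases eq_or_ne j i with rfl | hji <;> simp [*]
    · exact Finset.prod_eq_zero (Finset.mem_univ j) (by simp [hj])
  rw [Fin.sum_univ_castSucc, hlast, Finset.sum_congr rfl fun j _ => hface j, ← Finset.sum_filter,
    Finset.sum_const, nsmul_eq_mul]
  ring

theorem simplexCubature_monomial (n : ℕ) (d : Fin n → ℕ) :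
    simplexCubature n (fun x => ∏ i, x i ^ d i)
      = -(((n : ℝ) - 2) * (n + 1) / ((n + 2) * (n ! : ℝ))) * (1 / (n + 1 : ℝ)) ^ ∑ i, d i
        + ((n : ℝ) ^ 2 / ((n + 2)! : ℝ))
          * ((1 + (Finset.univ.filter (d · = 0)).card) * (1 / n : ℝ) ^ ∑ i, d i) := by
  rw [simplexCubature, sum_faceCenter_monomial, Finset.prod_pow_eq_pow_sum]

theorem cubature_weights_squarefree {n s z : ℕ} (hs : s ≤ 2) (hn : z + s = n) :
    -(((n : ℝ) - 2) * (n + 1) / ((n + 2) * (n ! : ℝ))) * (1 / (n + 1 : ℝ)) ^ s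
        + ((n : ℝ) ^ 2 / ((n + 2)! : ℝ)) * ((1 + z) * (1 / n : ℝ) ^ s)
      = 1 / (n + s)! := by
  subst hn
  interval_cases s <;>
  · push_cast [factorial_succ, add_zero]
    field_simp
    ring

theorem cubature_weights_square {n z : ℕ} (hn : z + 1 = n) :
    -(((n : ℝ) - 2) * (n + 1) / ((n + 2) * (n ! : ℝ))) * (1 / (n + 1 : ℝ)) ^ 2
        + ((n : ℝ) ^ 2 / ((n + 2)! : ℝ)) * ((1 + z) * (1 / n : ℝ) ^ 2)
      = 2 / (n + 2)! := by
  subst hn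
  push_cast [factorial_succ]
  field_simp
  ring

theorem simplexCubature_monomial_eq_integral (n : ℕ) (d : Fin n → ℕ) (hd : ∑ i, d i ≤ 2) :
    simplexCubature n (fun x => ∏ i, x i ^ d i) = ∫ v in Simplex n, ∏ i, v i ^ d i := by
  rw [simplexCubature_monomial, integral_simplex_monomial]
  have hcard := Finset.card_filter_add_card_filter_not (s := Finset.univ) (d · = 0)
  rw [Finset.card_univ, Fintype.card_fin] at hcard
  by_cases hsq : ∀ i, d i ≤ 1
  · have hsupp : (Finset.univ.filter (¬ d · = 0)).card = ∑ i, d i := by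
      rw [Finset.card_filter]
      exact Finset.sum_congr rfl fun i _ => by have := hsq i; split_ifs <;> omega
    have hprod : ∏ i, ((d i)! : ℝ) = 1 :=
      Finset.prod_eq_one fun i _ => by simp [factorial_eq_one.2 (hsq i)]
    rw [hprod, cubature_weights_squarefree hd (by omega)]
  · obtain ⟨i, hi⟩ := not_forall.1 hsq
    have hsplit := Finset.add_sum_erase Finset.univ d (Finset.mem_univ i)
    have hdi : d i = 2 := by omega
    have hrest : ∀ j ≠ i, d j = 0 := fun j hj =>
      Finset.sum_eq_zero_iff.1 (by omega) j (Finset.mem_erase.2 ⟨hj, Finset.mem_univ j⟩)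
    have hsupp : (Finset.univ.filter (¬ d · = 0)).card = 1 := by
      refine Finset.card_eq_one.2 ⟨i, Finset.ext fun j => ?_⟩
      rcases eq_or_ne j i with rfl | hj <;> simp [*]
    have hprod : ∏ j, ((d j)! : ℝ) = 2 := by
      rw [Finset.prod_eq_single i (fun j _ hj => by simp [hrest j hj]) (by simp), hdi]
      norm_num
    rw [hprod, show ∑ j, d j = 2 by omega, cubature_weights_square (by omega)]

theorem stmt_12 (n : ℕ) (p : MvPolynomial (Fin n) ℝ) (hp : p.totalDegree ≤ 2) :
    -(((n : ℝ) - 2) * (n + 1) / ((n + 2) * (Nat.factorial n : ℝ)))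
        * eval (fun _ => 1 / (n + 1 : ℝ)) p
      + ((n : ℝ)^2 / (Nat.factorial (n + 2) : ℝ)) * ∑ k : Fin (n + 1), eval (faceCenter n k) p
      = ∫ v in Simplex n, eval v p := by
  change simplexCubature n (fun v => eval v p) = _
  have hint (d : Fin n →₀ ℕ) : Integrable (fun v => coeff d p * ∏ i, v i ^ d i)
      (volume.restrict (Simplex n)) :=
    (integrableOn_simplex_monomial n d).const_mul _
  simp only [eval_eq']
  rw [simplexCubature_sum_mul, integral_finsetSum _ fun d _ => hint d]
  refine Finset.sum_congr rfl fun d hd => ?_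
  rw [integral_const_mul, simplexCubature_monomial_eq_integral]
  calc ∑ i, d i = d.sum fun _ e => e := (Finsupp.sum_fintype d (fun _ e => e) fun _ => rfl).symm
    _ ≤ 2 := (le_totalDegree hd).trans hp
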